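/- Under the transversal model of the query tree, if each tuple t of the database is assigned to exactly one node q(t) ∈ T (the unique transversal node returning t), then for any f : D → ℝ, choosing a leaf ℓ uniformly at random and letting q(ℓ) be its unique ancestor in T, the estimator (∑_{t : q(t) = q(ℓ)} f(t))/p(q(ℓ)) has expectation ∑_{t∈D} f(t). -/

import Mathlib

/-!
The leaves below a node `q` of the transversal are exactly the fibre of `anc` over `q`, so
`p q` is the probability that a uniform leaf lies below `q`, and dividing by it is importance
weighting: the expected estimate is the sum, over the nodes of the transversal, of the tuples
assigned to them. Since every node of the transversal is reached, this counts every tuple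
exactly once.
-/

open Finset

theorem Finset.sum_div_card_fiber {α β K : Type*} [Fintype α] [DecidableEq β]
    [Semifield K] [CharZero K] (a : α → β) (g : β → K) :
    ∑ x, g (a x) / (#{y | a y = a x} : K) = ∑ q ∈ univ.image a, g q := by
  rw [sum_comp (fun q => g q / (#{y | a y = q} : K)) a]
  refine sum_congr rfl fun q hq => ?_
  obtain ⟨x, -, rfl⟩ := mem_image.mp hq
  have hx : (#{y | a y = a x} : K) ≠ 0 :=
    Nat.cast_ne_zero.mpr (card_ne_zero_of_mem (mem_filter.mpr ⟨mem_univ x, rfl⟩))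
  rw [nsmul_eq_mul, mul_div_cancel₀ _ hx]

section Transversal

variable {α β : Type*} {below : α → β → Prop} {T : Finset β} {anc : α → β}

theorem below_anc_iff_anc_eq (hancT : ∀ ℓ, anc ℓ ∈ T) (hancA : ∀ ℓ, below ℓ (anc ℓ))
    (huniq : ∀ ℓ, ∀ q ∈ T, below ℓ q → q = anc ℓ) (ℓ ℓ' : α) :
    below ℓ' (anc ℓ) ↔ anc ℓ' = anc ℓ :=
  ⟨fun h => (huniq ℓ' _ (hancT ℓ) h).symm, fun h => h ▸ hancA ℓ'⟩

theorem image_anc_eq [Fintype α] [DecidableEq β] (hancT : ∀ ℓ, anc ℓ ∈ T)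
    (huniq : ∀ ℓ, ∀ q ∈ T, below ℓ q → q = anc ℓ) (hreach : ∀ q ∈ T, ∃ ℓ, below ℓ q) :
    univ.image anc = T := by
  refine Subset.antisymm (image_subset_iff.mpr fun ℓ _ => hancT ℓ) fun q hq => ?_
  obtain ⟨ℓ, hℓ⟩ := hreach q hq
  exact mem_image.mpr ⟨ℓ, mem_univ ℓ, (huniq ℓ q hq hℓ).symm⟩

end Transversal

theorem stmt_16_general (m : ℕ) (U : Fin m → Type) [∀ i, Fintype (U i)] [∀ i, Nonempty (U i)]
    [∀ i, DecidableEq (U i)]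
    (D : Type*) [Fintype D]
    (T : Finset (ℕ × (∀ i : Fin m, U i)))
    (anc : (∀ i : Fin m, U i) → ℕ × (∀ i : Fin m, U i))
    (hancT : ∀ ℓ, anc ℓ ∈ T)
    (hancA : ∀ ℓ, ∀ j : Fin m, (j : ℕ) < (anc ℓ).1 → ℓ j = (anc ℓ).2 j)
    (huniq : ∀ ℓ, ∀ q ∈ T, (∀ j : Fin m, (j : ℕ) < q.1 → ℓ j = q.2 j) → q = anc ℓ)
    (asg : D → ℕ × (∀ i : Fin m, U i)) (hasg : ∀ t, asg t ∈ T)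
    (f : D → ℝ) :
    (∑ ℓ : ∀ i : Fin m, U i,
        (∑ t ∈ Finset.univ.filter (fun t => asg t = anc ℓ), f t) /
          (((Finset.univ.filter
              (fun ℓ' : ∀ i : Fin m, U i =>
                ∀ j : Fin m, (j : ℕ) < (anc ℓ).1 → ℓ' j = (anc ℓ).2 j)).card : ℝ) /
            (Fintype.card (∀ i : Fin m, U i) : ℝ))) /
      (Fintype.card (∀ i : Fin m, U i) : ℝ)
    = ∑ t, f t := by
  -- the node `q` stands for the prefix of length `q.1` of the leaf `q.2`
  set below : (∀ i : Fin m, U i) → ℕ × (∀ i : Fin m, U i) → Prop :=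
    fun ℓ q => ∀ j : Fin m, (j : ℕ) < q.1 → ℓ j = q.2 j
  set g : ℕ × (∀ i : Fin m, U i) → ℝ := fun q => ∑ t ∈ univ.filter (fun t => asg t = q), f t
  have hN : (Fintype.card (∀ i : Fin m, U i) : ℝ) ≠ 0 := Nat.cast_ne_zero.mpr Fintype.card_ne_zero
  calc _ = ∑ ℓ, g (anc ℓ) / (#{ℓ' | anc ℓ' = anc ℓ} : ℝ) := by
        rw [sum_div]
        refine sum_congr rfl fun ℓ _ => ?_
        rw [filter_congr fun ℓ' _ => below_anc_iff_anc_eq (below := below) hancT hancA huniq ℓ ℓ',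
          div_div, div_mul_cancel₀ _ hN]
    _ = ∑ q ∈ T, g q := by
        rw [sum_div_card_fiber,
          image_anc_eq (below := below) hancT huniq fun q _ => ⟨q.2, fun _ _ => rfl⟩]
    _ = ∑ t, f t := sum_fiberwise_of_maps_to (fun t _ => hasg t) f

/-- Unbiasedness of drill-down estimation in the transversal model of the query tree.
Leaves are `∀ i : Fin m, U i`; nodes are pairs `(level, representative leaf)`; `T` is a
transversal, `anc ℓ` the unique node of `T` through which leaf `ℓ` passes, each tuple
`t` of the database `D` is assigned to a node `asg t ∈ T`, and `p q` is the fraction of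
leaves passing through `q`.  Choosing a leaf uniformly at random, the estimator
`(∑_{t : asg t = anc ℓ} f t) / p (anc ℓ)` has expectation `∑_{t ∈ D} f t`. -/
theorem stmt_16 (m : ℕ) (U : Fin m → Type) [∀ i, Fintype (U i)] [∀ i, Nonempty (U i)]
    [∀ i, DecidableEq (U i)]
    (D : Type*) [Fintype D]
    (T : Finset (ℕ × (∀ i : Fin m, U i)))
    (hlevel : ∀ q ∈ T, q.1 ≤ m)
    (anc : (∀ i : Fin m, U i) → ℕ × (∀ i : Fin m, U i))
    (hancT : ∀ ℓ, anc ℓ ∈ T)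
    (hancA : ∀ ℓ, ∀ j : Fin m, (j : ℕ) < (anc ℓ).1 → ℓ j = (anc ℓ).2 j)
    (huniq : ∀ ℓ, ∀ q ∈ T, (∀ j : Fin m, (j : ℕ) < q.1 → ℓ j = q.2 j) → q = anc ℓ)
    (asg : D → ℕ × (∀ i : Fin m, U i)) (hasg : ∀ t, asg t ∈ T)
    (f : D → ℝ) :
    (∑ ℓ : ∀ i : Fin m, U i,
        (∑ t ∈ Finset.univ.filter (fun t => asg t = anc ℓ), f t) /
          (((Finset.univ.filter
              (fun ℓ' : ∀ i : Fin m, U i =>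
                ∀ j : Fin m, (j : ℕ) < (anc ℓ).1 → ℓ' j = (anc ℓ).2 j)).card : ℝ) /
            (Fintype.card (∀ i : Fin m, U i) : ℝ))) /
      (Fintype.card (∀ i : Fin m, U i) : ℝ)
    = ∑ t, f t :=
  stmt_16_general m U D T anc hancT hancA huniq asg hasg f
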